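/- Let φ = (φ₁, φ_q) be a real symbol, α ∈ [0,1), c ∈ ℝ, and let g = (g₁, g_q) ∈ H²_α be outer with φ₁·|g₁|² = c·log(q^{-1/2}) almost everywhere on [0,2π) and φ_q·|g_q|² = c·log(q^{1/2}) almost everywhere on [0,2π). Then T_φ^α g = 0. -/

import Mathlib

/-! For a Laurent monomial `z^k`, with `K = c log q^{-1/2}` the hypotheses say `φ₁|g₁|² = K`
and `φ_q|g_q|² = -K`, so `⟪z^k g, φ g⟫ = K (1 - q^k) ∫ e^{-ikt} dt`. This vanishes for `k = 0`
because of the factor `1 - q^k` and for `k ≠ 0` because the integral does. Hence `φ g` is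
orthogonal to the Laurent-polynomial multiples of `g`, which are dense in `H²_α` since `g` is
outer, and `P_α (φ g) = 0`. -/

noncomputable section

open MeasureTheory Complex
open scoped ComplexConjugate

namespace AnnulusToeplitz

/-- Lebesgue measure `dt` on `[0, 2π)`. -/
abbrev μI : Measure ℝ := volume.restrict (Set.Ico 0 (2 * Real.pi))

instance : IsFiniteMeasure μI := by
  constructor
  rw [Measure.restrict_apply_univ]
  rw [Real.volume_Ico]
  exact ENNReal.ofReal_lt_top

/-- `L²([0,2π), dt; ℂ)`. -/
abbrev L2I : Type := Lp ℂ 2 μI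

/-- The Hilbert space `L² ⊕ L²`; the first summand carries boundary values on the outer
circle `B₁` (`z = e^{it}`), the second on the inner circle `B_q` (`z = q e^{it}`). -/
abbrev L2A : Type := WithLp 2 (L2I × L2I)

/-- Build an element of `L² ⊕ L²` from its two coordinates. -/
def pairA (f g : L2I) : L2A := (WithLp.equiv 2 (L2I × L2I)).symm (f, g)

/-- Outer-boundary coordinate. -/
def fst' (x : L2A) : L2I := ((WithLp.equiv 2 (L2I × L2I)) x).1

/-- Inner-boundary coordinate. -/
def snd' (x : L2A) : L2I := ((WithLp.equiv 2 (L2I × L2I)) x).2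

/-- A bounded (a.e.) measurable function times an `L²` function is in `L²`. -/
lemma memLp_bdd_mul {φ : ℝ → ℂ} (hφ : AEStronglyMeasurable φ μI) (C : ℝ)
    (hC : ∀ᵐ t ∂μI, ‖φ t‖ ≤ C) (g : L2I) :
    MemLp (fun t => φ t * g t) 2 μI := by
  refine MemLp.of_le_mul (c := C) (Lp.memLp g) (hφ.mul (Lp.aestronglyMeasurable g)) ?_
  filter_upwards [hC] with t ht
  rw [norm_mul]
  exact mul_le_mul_of_nonneg_right ht (norm_nonneg _)

lemma memLp_exp (r : ℝ) :
    MemLp (fun t : ℝ => Complex.exp (((r * t : ℝ) : ℂ) * Complex.I)) 2 μI := by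
  refine MemLp.of_bound (Continuous.aestronglyMeasurable (by fun_prop)) 1
    (Filter.Eventually.of_forall fun t => ?_)
  simp [Complex.norm_exp, Complex.mul_re, Complex.mul_im]

/-- The modulus-automorphic exponential `e_r(t) = e^{irt}` as an element of `L²`. -/
def eA (r : ℝ) : L2I := (memLp_exp r).toLp _

/-- The spanning vectors `(e_{n+α}, q^{n+α} e_{n+α})` of the Sarason Hardy space `H²_α`. -/
def basisA (q α : ℝ) (n : ℤ) : L2A :=
  pairA (eA ((n : ℝ) + α)) (((q ^ ((n : ℝ) + α) : ℝ) : ℂ) • eA ((n : ℝ) + α))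

/-- The Sarason Hardy space `H²_α`, the closed span of `{(e_{n+α}, q^{n+α} e_{n+α}) : n ∈ ℤ}`. -/
def H2a (q α : ℝ) : Submodule ℂ L2A :=
  (Submodule.span ℂ (Set.range (basisA q α))).topologicalClosure

instance (q α : ℝ) : CompleteSpace (H2a q α) :=
  (Submodule.isClosed_topologicalClosure _).completeSpace_coe

/-- Coordinatewise multiplication of `g ∈ L² ⊕ L²` by a real symbol `φ = (φ₁, φ_q)`. -/
def symbolMul (φ1 φq : ℝ → ℝ) (h1 : Measurable φ1) (hq : Measurable φq)
    {C : ℝ} (hb1 : ∀ t, |φ1 t| ≤ C) (hbq : ∀ t, |φq t| ≤ C) (g : L2A) : L2A :=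
  pairA
    ((memLp_bdd_mul ((Complex.measurable_ofReal.comp h1).aestronglyMeasurable) C
      (Filter.Eventually.of_forall fun t => by simpa using hb1 t) (fst' g)).toLp _)
    ((memLp_bdd_mul ((Complex.measurable_ofReal.comp hq).aestronglyMeasurable) C
      (Filter.Eventually.of_forall fun t => by simpa using hbq t) (snd' g)).toLp _)

/-- The Toeplitz operator `T_φ^α : H²_α → H²_α`, `g ↦ P_α (φ · g)`. -/
def toeplitzA (q : ℝ) (φ1 φq : ℝ → ℝ) (h1 : Measurable φ1) (hq : Measurable φq)
    {C : ℝ} (hb1 : ∀ t, |φ1 t| ≤ C) (hbq : ∀ t, |φq t| ≤ C) (α : ℝ)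
    (g : H2a q α) : H2a q α :=
  (H2a q α).orthogonalProjectionOnto (symbolMul φ1 φq h1 hq hb1 hbq (g : L2A))

/-- The action of the Laurent monomial `z^k` on `L² ⊕ L²`:
`(g₁, g_q) ↦ (e^{ikt} g₁, q^k e^{ikt} g_q)`. -/
def mulMono (q : ℝ) (k : ℤ) (g : L2A) : L2A :=
  pairA
    ((memLp_bdd_mul (Continuous.aestronglyMeasurable (by fun_prop)) 1
      (Filter.Eventually.of_forall fun t => by
        simp [Complex.norm_exp, Complex.mul_re, Complex.mul_im]) (fst' g)).toLp
      (fun t : ℝ => Complex.exp ((((k : ℝ) * t : ℝ) : ℂ) * Complex.I) * (fst' g) t))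
    ((memLp_bdd_mul (Continuous.aestronglyMeasurable (by fun_prop)) |q ^ k|
      (Filter.Eventually.of_forall fun t => by
        rw [show |q ^ k| = |q| ^ k by
          rw [abs_zpow]]
        simp [Complex.norm_exp, Complex.mul_re, Complex.mul_im,
          abs_mul]) (snd' g)).toLp
      (fun t : ℝ => ((q ^ k : ℝ) : ℂ) *
        Complex.exp ((((k : ℝ) * t : ℝ) : ℂ) * Complex.I) * (snd' g) t))

/-- `g` is outer in `H²_α`: the Laurent-polynomial multiples of `g` are dense in `H²_α`. -/
def OuterA (q α : ℝ) (g : L2A) : Prop :=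
  (Submodule.span ℂ (Set.range fun k : ℤ => mulMono q k g)).topologicalClosure = H2a q α

/-- `lam` is an eigenvalue of the real symbol `φ = (φ₁, φ_q)` relative to `A(𝔸)`. -/
def IsEigenvalueRelAnn (q : ℝ) (φ1 φq : ℝ → ℝ) (h1 : Measurable φ1) (hq : Measurable φq)
    {C : ℝ} (hb1 : ∀ t, |φ1 t| ≤ C) (hbq : ∀ t, |φq t| ≤ C) (lam : ℝ) : Prop :=
  ∃ α : ℝ, 0 ≤ α ∧ α < 1 ∧ ∃ g : H2a q α, g ≠ 0 ∧
    toeplitzA q φ1 φq h1 hq hb1 hbq α g = (lam : ℂ) • g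

end AnnulusToeplitz

namespace Submodule

variable {𝕜 E ι : Type*} [RCLike 𝕜] [NormedAddCommGroup E] [InnerProductSpace 𝕜 E]

theorem orthogonalProjectionOnto_eq_zero_of_inner_eq_zero {K : Submodule 𝕜 E}
    [K.HasOrthogonalProjection] {v : ι → E}
    (hK : (span 𝕜 (Set.range v)).topologicalClosure = K) {x : E}
    (hx : ∀ i, inner 𝕜 (v i) x = 0) :
    K.orthogonalProjectionOnto x = 0 := by
  refine orthogonalProjectionOnto_apply_of_mem_orthogonal ?_
  have hortho : span 𝕜 (Set.range v) ⟂ span 𝕜 {x} := by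
    rw [isOrtho_span]
    rintro _ ⟨i, rfl⟩ _ rfl
    exact hx i
  rw [← hK, orthogonal_closure]
  exact hortho.symm (mem_span_singleton_self x)

end Submodule

theorem MeasureTheory.MemLp.inner_toLp {α : Type*} [MeasurableSpace α] {μ : Measure α}
    {f h : α → ℂ} (hf : MemLp f 2 μ) (hh : MemLp h 2 μ) :
    inner ℂ (hf.toLp f) (hh.toLp h) = ∫ a, conj (f a) * h a ∂μ := by
  refine integral_congr_ae ?_
  filter_upwards [hf.coeFn_toLp, hh.coeFn_toLp] with a hfa hha
  rw [hfa, hha, RCLike.inner_apply']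

namespace AnnulusToeplitz

theorem integral_exp_int_mul_I_eq_zero {k : ℤ} (hk : k ≠ 0) :
    ∫ t, exp (((k * t : ℝ) : ℂ) * I) ∂μI = 0 := by
  have hc : (k : ℂ) * I ≠ 0 := mul_ne_zero (Int.cast_ne_zero.2 hk) I_ne_zero
  simp_rw [show ∀ t : ℝ, (((k * t : ℝ) : ℂ) * I) = (k * I) * t from fun t => by push_cast; ring]
  rw [integral_Ico_eq_integral_Ioo, ← integral_Ioc_eq_integral_Ioo,
    ← intervalIntegral.integral_of_le Real.two_pi_pos.le, integral_exp_mul_complex hc,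
    show (k : ℂ) * I * ((2 * Real.pi : ℝ) : ℂ) = k * (2 * Real.pi * I) by push_cast; ring,
    exp_int_mul_two_pi_mul_I]
  simp

theorem conj_mul_mul_ofReal_mul (a z : ℂ) (r : ℝ) :
    conj (a * z) * (r * z) = conj a * ((r * ‖z‖ ^ 2 : ℝ) : ℂ) := by
  rw [map_mul, ofReal_mul, ofReal_pow, ← conj_mul' z]
  ring

theorem inner_pairA (a b x y : L2I) :
    inner ℂ (pairA a b) (pairA x y) = inner ℂ a x + inner ℂ b y :=
  WithLp.prod_inner_apply _ _

theorem inner_mulMono_symbolMul (q : ℝ) (k : ℤ) (φ1 φq : ℝ → ℝ) (h1 : Measurable φ1)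
    (hq : Measurable φq) {C : ℝ} (hb1 : ∀ t, |φ1 t| ≤ C) (hbq : ∀ t, |φq t| ≤ C) (g : L2A) :
    inner ℂ (mulMono q k g) (symbolMul φ1 φq h1 hq hb1 hbq g) =
      ∫ t, conj (exp (((k * t : ℝ) : ℂ) * I)) * ((φ1 t * ‖fst' g t‖ ^ 2 : ℝ) : ℂ) ∂μI +
      (q ^ k : ℝ) *
        ∫ t, conj (exp (((k * t : ℝ) : ℂ) * I)) * ((φq t * ‖snd' g t‖ ^ 2 : ℝ) : ℂ) ∂μI := by
  rw [mulMono, symbolMul, inner_pairA, MemLp.inner_toLp, MemLp.inner_toLp, ← integral_const_mul]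
  congr 1 <;> refine integral_congr_ae (Filter.Eventually.of_forall fun t => ?_)
  · exact conj_mul_mul_ofReal_mul _ _ _
  · simp only [Function.comp_apply]
    rw [conj_mul_mul_ofReal_mul, map_mul, conj_ofReal, mul_assoc]

theorem inner_mulMono_symbolMul_eq_zero (q : ℝ) (φ1 φq : ℝ → ℝ) (h1 : Measurable φ1)
    (hq : Measurable φq) {C : ℝ} (hb1 : ∀ t, |φ1 t| ≤ C) (hbq : ∀ t, |φq t| ≤ C) {g : L2A}
    {K : ℝ} (hK1 : ∀ᵐ t ∂μI, φ1 t * ‖fst' g t‖ ^ 2 = K)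
    (hKq : ∀ᵐ t ∂μI, φq t * ‖snd' g t‖ ^ 2 = -K) (k : ℤ) :
    inner ℂ (mulMono q k g) (symbolMul φ1 φq h1 hq hb1 hbq g) = 0 := by
  set e : ℝ → ℂ := fun t => exp (((k * t : ℝ) : ℂ) * I)
  have hI1 : ∫ t, conj (e t) * ((φ1 t * ‖fst' g t‖ ^ 2 : ℝ) : ℂ) ∂μI =
      conj (∫ t, e t ∂μI) * K := by
    rw [← integral_conj, ← integral_mul_const]
    exact integral_congr_ae (hK1.mono fun t ht => by simp only [ht])
  have hIq : ∫ t, conj (e t) * ((φq t * ‖snd' g t‖ ^ 2 : ℝ) : ℂ) ∂μI =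
      -(conj (∫ t, e t ∂μI) * K) := by
    rw [← integral_conj, ← integral_mul_const, ← integral_neg]
    exact integral_congr_ae (hKq.mono fun t ht => by simp only [ht, ofReal_neg, mul_neg])
  rw [inner_mulMono_symbolMul, hI1, hIq]
  rcases eq_or_ne k 0 with rfl | hk
  · simp
  · have he : ∫ t, e t ∂μI = 0 := integral_exp_int_mul_I_eq_zero hk
    simp [he]

theorem annulus_kernel_of_outer_general (q : ℝ) (hq0 : 0 < q)
    (φ1 φq : ℝ → ℝ) (h1 : Measurable φ1) (hq' : Measurable φq)
    {C : ℝ} (hb1 : ∀ t, |φ1 t| ≤ C) (hbq : ∀ t, |φq t| ≤ C)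
    (α : ℝ) (c : ℝ)
    (g : H2a q α) (hout : OuterA q α (g : L2A))
    (heq1 : ∀ᵐ t ∂μI, φ1 t * ‖(fst' (g : L2A)) t‖ ^ 2 = c * Real.log (q ^ (-(1 : ℝ) / 2)))
    (heqq : ∀ᵐ t ∂μI, φq t * ‖(snd' (g : L2A)) t‖ ^ 2 = c * Real.log (q ^ ((1 : ℝ) / 2))) :
    toeplitzA q φ1 φq h1 hq' hb1 hbq α g = 0 := by
  have hlog : c * Real.log (q ^ ((1 : ℝ) / 2)) = -(c * Real.log (q ^ (-(1 : ℝ) / 2))) := by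
    rw [Real.log_rpow hq0, Real.log_rpow hq0]
    ring
  rw [hlog] at heqq
  exact Submodule.orthogonalProjectionOnto_eq_zero_of_inner_eq_zero hout
    (inner_mulMono_symbolMul_eq_zero q φ1 φq h1 hq' hb1 hbq heq1 heqq)

/-- if `g ∈ H²_α` is outer and `φ₁|g₁|² = c log(q^{-1/2})`,
`φ_q|g_q|² = c log(q^{1/2})` a.e. for some real `c`, then `T_φ^α g = 0`. -/
theorem annulus_kernel_of_outer (q : ℝ) (hq0 : 0 < q) (hq1 : q < 1)
    (φ1 φq : ℝ → ℝ) (h1 : Measurable φ1) (hq' : Measurable φq)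
    {C : ℝ} (hb1 : ∀ t, |φ1 t| ≤ C) (hbq : ∀ t, |φq t| ≤ C)
    (α : ℝ) (hα0 : 0 ≤ α) (hα1 : α < 1) (c : ℝ)
    (g : H2a q α) (hout : OuterA q α (g : L2A))
    (heq1 : ∀ᵐ t ∂μI, φ1 t * ‖(fst' (g : L2A)) t‖ ^ 2 = c * Real.log (q ^ (-(1 : ℝ) / 2)))
    (heqq : ∀ᵐ t ∂μI, φq t * ‖(snd' (g : L2A)) t‖ ^ 2 = c * Real.log (q ^ ((1 : ℝ) / 2))) :
    toeplitzA q φ1 φq h1 hq' hb1 hbq α g = 0 :=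
  annulus_kernel_of_outer_general q hq0 φ1 φq h1 hq' hb1 hbq α c g hout heq1 heqq

end AnnulusToeplitz
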